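/- For all integers k ≥ 1 and n ≥ 1, the counts of peakless Motzkin paths ending at a given level satisfy the linear recursion m(n+1, k) = m(n, k−1) + m(n, k) + m(n, k+1) − m(n−1, k). -/

import Mathlib

/-- Steps of a Motzkin path: up, down, flat. -/
inductive Step : Type
  | U : Step
  | D : Step
  | F : Step
  deriving DecidableEq

instance : Fintype Step :=
  ⟨{Step.U, Step.D, Step.F}, by intro x; cases x <;> simp⟩

/-- The value (vertical displacement) of a step. -/
def Step.val : Step → ℤ
  | .U => 1
  | .D => -1
  | .F => 0

/-- The partial sum of the first `i` step values of the word `w`. -/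
def psum {n : ℕ} (w : Fin n → Step) (i : ℕ) : ℤ :=
  ∑ j : Fin n, if (j : ℕ) < i then (w j).val else 0

/-- A word is peakless if no up-step is immediately followed by a down-step. -/
def Peakless {n : ℕ} (w : Fin n → Step) : Prop :=
  ∀ i : ℕ, ∀ h : i + 1 < n,
    ¬(w ⟨i, Nat.lt_of_succ_lt h⟩ = Step.U ∧ w ⟨i + 1, h⟩ = Step.D)

/-- `w` is a peakless Motzkin path from level `0` to level `k`:
all partial sums are nonnegative, the total sum is `k`, and there is no peak. -/
def IsPeaklessMotzkinTo {n : ℕ} (w : Fin n → Step) (k : ℤ) : Prop :=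
  (∀ i : ℕ, 0 ≤ psum w i) ∧ psum w n = k ∧ Peakless w

/-- The height of a path: the maximum of its partial sums (0 for the empty path). -/
def height {n : ℕ} (w : Fin n → Step) : ℤ :=
  (Finset.range (n + 1)).sup' Finset.nonempty_range_add_one (psum w)

/-- `mTo n k`: the number of peakless Motzkin paths of length `n` from level `0` to level `k`. -/
noncomputable def mTo (n : ℕ) (k : ℤ) : ℕ :=
  Nat.card {w : Fin n → Step // IsPeaklessMotzkinTo w k}

/-- `m n`: the number of peakless Motzkin paths of length `n`. -/
noncomputable def m (n : ℕ) : ℕ := mTo n 0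

/-- `A n ℓ`: the number of peakless Motzkin paths of length `n` of height at most `ℓ`. -/
noncomputable def A (n ℓ : ℕ) : ℕ :=
  Nat.card {w : Fin n → Step // IsPeaklessMotzkinTo w 0 ∧ height w ≤ (ℓ : ℤ)}

/-! Split a path of length `n + 1` by its last step. A final `U` or `F` step leaves an arbitrary
path to level `k - 1` or `k`; a final `D` step leaves a path to level `k + 1` whose last step is
not `U`, since otherwise it would create a peak. Among the paths of length `n` to `k + 1`, those
ending in `U` are exactly the paths of length `n - 1` to `k` followed by `U`, so the `D`-term is
`m(n, k+1) - m(n-1, k)`. -/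

theorem Nat.card_subtype_eq_sum_snoc {α : Type*} [Fintype α] {n : ℕ}
    (P : (Fin (n + 1) → α) → Prop) :
    Nat.card {w // P w} = ∑ a, Nat.card {v : Fin n → α // P (Fin.snoc v a)} := by
  rw [← Nat.card_sigma]
  exact Nat.card_congr <| ((Fin.snocEquiv fun _ => α).subtypeEquiv fun _ => Iff.rfl).symm.trans
    (Equiv.subtypeProdEquivSigmaSubtype fun a v => P (Fin.snoc v a))

theorem Step.sum_univ {M : Type*} [AddCommMonoid M] (f : Step → M) :
    ∑ s, f s = f .U + f .D + f .F := by
  rw [show (Finset.univ : Finset Step) = {.U, .D, .F} from rfl, Finset.sum_insert (by decide),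
    Finset.sum_pair (by decide), add_assoc]

theorem psum_snoc {n : ℕ} (v : Fin n → Step) (s : Step) (i : ℕ) :
    psum (Fin.snoc v s) i = psum v i + if n < i then s.val else 0 := by
  simp only [psum, Fin.sum_univ_castSucc, Fin.snoc_castSucc, Fin.snoc_last, Fin.val_castSucc,
    Fin.val_last]

theorem psum_of_le {n : ℕ} (w : Fin n → Step) {i : ℕ} (hi : n ≤ i) : psum w i = psum w n :=
  Finset.sum_congr rfl fun j _ => by rw [if_pos (j.isLt.trans_le hi), if_pos j.isLt]

theorem psum_snoc_nonneg_and_eq_iff {n : ℕ} (v : Fin n → Step) (s : Step) {k : ℤ} (hk : 0 ≤ k) :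
    ((∀ i, 0 ≤ psum (Fin.snoc v s) i) ∧ psum (Fin.snoc v s) (n + 1) = k) ↔
      (∀ i, 0 ≤ psum v i) ∧ psum v n = k - s.val := by
  have h_last : psum (Fin.snoc v s) (n + 1) = psum v n + s.val := by
    rw [psum_snoc, psum_of_le v n.le_succ, if_pos n.lt_succ_self]
  rw [h_last, ← eq_sub_iff_add_eq]
  refine and_congr_left fun h_total => ⟨fun h i => ?_, fun h i => ?_⟩
  · have h_init (j : ℕ) (hj : j ≤ n) : 0 ≤ psum v j := by
      simpa [psum_snoc, hj.not_gt] using h j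
    rcases le_or_gt i n with hi | hi
    · exact h_init i hi
    · rw [psum_of_le v hi.le]
      exact h_init n le_rfl
  · rw [psum_snoc]
    split_ifs with hi
    · rw [psum_of_le v hi.le, h_total, sub_add_cancel]
      exact hk
    · simpa using h i

theorem peakless_snoc_iff {n : ℕ} (v : Fin n → Step) (s : Step) :
    Peakless (Fin.snoc v s) ↔
      Peakless v ∧ ∀ i : Fin n, (i : ℕ) + 1 = n → ¬(v i = .U ∧ s = .D) := by
  constructor
  · intro h
    refine ⟨fun i hi => ?_, fun i hi => ?_⟩
    · simpa [Fin.snoc, hi, Nat.lt_of_succ_lt hi] using h i (hi.trans n.lt_succ_self)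
    · simpa [Fin.snoc, hi] using h i (by omega)
  · rintro ⟨h, h_last⟩ i hi
    rcases (Nat.lt_succ_iff.mp hi).lt_or_eq with hi' | hi'
    · simpa [Fin.snoc, hi', Nat.lt_of_succ_lt hi'] using h i hi'
    · simpa [Fin.snoc, hi', (by omega : i < n)] using h_last ⟨i, by omega⟩ hi'

theorem isPeaklessMotzkinTo_snoc_iff {n : ℕ} (v : Fin n → Step) (s : Step) {k : ℤ} (hk : 0 ≤ k) :
    IsPeaklessMotzkinTo (Fin.snoc v s) k ↔
      IsPeaklessMotzkinTo v (k - s.val) ∧ ∀ i : Fin n, (i : ℕ) + 1 = n → ¬(v i = .U ∧ s = .D) := by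
  rw [IsPeaklessMotzkinTo, IsPeaklessMotzkinTo, ← and_assoc, psum_snoc_nonneg_and_eq_iff v s hk,
    peakless_snoc_iff, and_assoc, and_assoc, and_assoc]

theorem isPeaklessMotzkinTo_snoc_snoc_down_iff {n : ℕ} (u : Fin n → Step) (t : Step) {k : ℤ}
    (hk : 0 ≤ k) :
    IsPeaklessMotzkinTo (Fin.snoc (Fin.snoc u t) .D) k ↔
      IsPeaklessMotzkinTo (Fin.snoc u t) (k + 1) ∧ t ≠ .U := by
  rw [isPeaklessMotzkinTo_snoc_iff _ _ hk, Step.val, sub_neg_eq_add]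
  refine and_congr_right fun _ => ⟨fun h hU => h (Fin.last n) rfl ⟨by simpa using hU, rfl⟩, ?_⟩
  rintro ht i hi ⟨hU, -⟩
  obtain rfl : i = Fin.last n := Fin.ext (by simpa using hi)
  exact ht (by simpa using hU)

-- Counts paths of length `n + 1`, not `n`, with last step `s`.
noncomputable def mToLast (s : Step) (n : ℕ) (k : ℤ) : ℕ :=
  Nat.card {v : Fin n → Step // IsPeaklessMotzkinTo (Fin.snoc v s) k}

theorem mTo_succ (n : ℕ) (k : ℤ) :
    mTo (n + 1) k = mToLast .U n k + mToLast .D n k + mToLast .F n k :=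
  (Nat.card_subtype_eq_sum_snoc _).trans (Step.sum_univ _)

theorem mToLast_up (n : ℕ) {k : ℤ} (hk : 0 ≤ k) : mToLast .U n k = mTo n (k - 1) :=
  Nat.card_congr <| Equiv.subtypeEquivRight fun v => by
    simp [isPeaklessMotzkinTo_snoc_iff v _ hk, Step.val]

theorem mToLast_flat (n : ℕ) {k : ℤ} (hk : 0 ≤ k) : mToLast .F n k = mTo n k :=
  Nat.card_congr <| Equiv.subtypeEquivRight fun v => by
    simp [isPeaklessMotzkinTo_snoc_iff v _ hk, Step.val]

theorem mToLast_down_succ_add_mTo (n : ℕ) {k : ℤ} (hk : 0 ≤ k) :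
    mToLast .D (n + 1) k + mTo n k = mTo (n + 1) (k + 1) := by
  have h_split : mToLast .D (n + 1) k = mToLast .D n (k + 1) + mToLast .F n (k + 1) := by
    rw [mToLast, Nat.card_subtype_eq_sum_snoc, Step.sum_univ]
    simp [isPeaklessMotzkinTo_snoc_snoc_down_iff _ _ hk, mToLast]
  rw [h_split, mTo_succ, mToLast_up n (by omega), add_sub_cancel_right]
  ring

/-- For `k ≥ 1` and `n ≥ 1`, the counts of peakless Motzkin paths ending at a given level
satisfy `m(n+1, k) = m(n, k−1) + m(n, k) + m(n, k+1) − m(n−1, k)`. -/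
theorem peakless_level_counts_recursion (k : ℤ) (hk : 1 ≤ k) (n : ℕ) (hn : 1 ≤ n) :
    (mTo (n + 1) k : ℤ)
      = mTo n (k - 1) + mTo n k + mTo n (k + 1) - mTo (n - 1) k := by
  obtain ⟨n, rfl⟩ := Nat.exists_eq_add_of_le' hn
  have hk0 : 0 ≤ k := by omega
  have h_last := mTo_succ (n + 1) k
  rw [mToLast_up _ hk0, mToLast_flat _ hk0] at h_last
  have h_down := mToLast_down_succ_add_mTo n hk0
  rw [Nat.add_sub_cancel]
  omega
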